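/- Let χ be a fixed smooth function on ℝ with χ(s) = 1 for |s| ≤ 1/2 and χ(s) = 0 for |s| ≥ 1. For λ > 0 and y, y₁ ∈ ℝ² define K(λ,y,y₁) = χ(λ|y−y₁|) − χ(λ(|y|+1)). Then there is a constant C (depending only on χ) such that for all λ > 0 and all y, y₁ ∈ ℝ²: |K(λ,y,y₁)| ≤ C λ ⟨y₁⟩, |∂_λ K(λ,y,y₁)| ≤ C ⟨y₁⟩, and |∂_λ² K(λ,y,y₁)| ≤ C λ^{−1} ⟨y₁⟩. -/

import Mathlib

open MeasureTheory Real Set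

noncomputable section

/-- The plane `ℝ²`. -/
abbrev Plane : Type := EuclideanSpace ℝ (Fin 2)

/-- The Japanese bracket `⟨x⟩ = (1+|x|²)^{1/2}`. -/
def jap (x : Plane) : ℝ := (1 + ‖x‖ ^ 2) ^ ((1:ℝ)/2)

/-- Bounds for `K(λ,y,y₁) = χ(λ|y−y₁|) − χ(λ(|y|+1))`:
`|K| ≲ λ⟨y₁⟩`, `|∂_λK| ≲ ⟨y₁⟩`, `|∂_λ²K| ≲ λ⁻¹⟨y₁⟩`. -/
theorem cutoff_difference_bounds
    (χ : ℝ → ℝ) (hχ : ContDiff ℝ (⊤ : ℕ∞) χ)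
    (hχ1 : ∀ s : ℝ, |s| ≤ 1 / 2 → χ s = 1)
    (hχ0 : ∀ s : ℝ, 1 ≤ |s| → χ s = 0) :
    ∃ C : ℝ, 0 < C ∧ ∀ l : ℝ, 0 < l → ∀ y y₁ : Plane,
      |χ (l * ‖y - y₁‖) - χ (l * (‖y‖ + 1))| ≤ C * l * jap y₁ ∧
      |deriv (fun s : ℝ => χ (s * ‖y - y₁‖) - χ (s * (‖y‖ + 1))) l| ≤ C * jap y₁ ∧
      |iteratedDeriv 2 (fun s : ℝ => χ (s * ‖y - y₁‖) - χ (s * (‖y‖ + 1))) l| ≤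
        C * l⁻¹ * jap y₁ := by
  classical
  have hsm : ContDiff ℝ (⊤:ℕ∞) χ := hχ.of_le (by simp)
  set d1 := deriv χ with hd1def
  set d2 := deriv d1 with hd2def
  set d3 := deriv d2 with hd3def
  have hsm1 : ContDiff ℝ (⊤:ℕ∞) d1 := (contDiff_infty_iff_deriv.mp hsm).2
  have hsm2 : ContDiff ℝ (⊤:ℕ∞) d2 := (contDiff_infty_iff_deriv.mp hsm1).2
  have hsm3 : ContDiff ℝ (⊤:ℕ∞) d3 := (contDiff_infty_iff_deriv.mp hsm2).2
  have htop : (1 : WithTop ℕ∞) ≤ ((⊤:ℕ∞) : WithTop ℕ∞) := by exact_mod_cast le_top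
  have hd : ∀ t : ℝ, HasDerivAt χ (d1 t) t := fun t => (hsm.differentiable (by simp) t).hasDerivAt
  have hd1 : ∀ t : ℝ, HasDerivAt d1 (d2 t) t := fun t => (hsm1.differentiable (by simp) t).hasDerivAt
  have hd2 : ∀ t : ℝ, HasDerivAt d2 (d3 t) t := fun t => (hsm2.differentiable (by simp) t).hasDerivAt
  -- vanishing of derivatives for |s| > 1
  have hopen : IsOpen {t : ℝ | 1 < |t|} := isOpen_lt continuous_const continuous_abs
  have hev : ∀ s : ℝ, 1 < |s| → χ =ᶠ[nhds s] (fun _ => (0:ℝ)) := by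
    intro s hs
    filter_upwards [hopen.mem_nhds hs] with t ht using hχ0 t ht.le
  have hd1z : ∀ s : ℝ, 1 < |s| → d1 s = 0 := by
    intro s hs; simpa using (hev s hs).deriv_eq
  have hev1 : ∀ s : ℝ, 1 < |s| → d1 =ᶠ[nhds s] (fun _ => (0:ℝ)) := by
    intro s hs
    filter_upwards [hopen.mem_nhds hs] with t ht using hd1z t ht
  have hd2z : ∀ s : ℝ, 1 < |s| → d2 s = 0 := by
    intro s hs; simpa using (hev1 s hs).deriv_eq
  have hev2 : ∀ s : ℝ, 1 < |s| → d2 =ᶠ[nhds s] (fun _ => (0:ℝ)) := by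
    intro s hs
    filter_upwards [hopen.mem_nhds hs] with t ht using hd2z t ht
  have hd3z : ∀ s : ℝ, 1 < |s| → d3 s = 0 := by
    intro s hs; simpa using (hev2 s hs).deriv_eq
  -- boundedness
  have hbd : ∀ f : ℝ → ℝ, Continuous f → (∀ s : ℝ, 1 < |s| → f s = 0) →
      ∃ M : ℝ, 0 ≤ M ∧ ∀ t : ℝ, |f t| ≤ M := by
    intro f hf h0
    have hcs : HasCompactSupport f := by
      refine HasCompactSupport.intro (isCompact_Icc (a := (-1:ℝ)) (b := 1)) ?_
      intro x hx
      refine h0 x ?_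
      by_contra hcon
      push_neg at hcon
      exact hx (Set.mem_Icc.mpr (abs_le.mp hcon))
    obtain ⟨M, hM⟩ := hcs.exists_bound_of_continuous hf
    exact ⟨M, le_trans (norm_nonneg (f 0)) (hM 0), fun t => by simpa using hM t⟩
  obtain ⟨M1, hM1n, hM1⟩ := hbd d1 hsm1.continuous hd1z
  obtain ⟨M2, hM2n, hM2⟩ := hbd d2 hsm2.continuous hd2z
  obtain ⟨M3, hM3n, hM3⟩ := hbd d3 hsm3.continuous hd3z
  -- bounds on t*d2 t and t^2*d3 t
  have hsd2 : ∀ t : ℝ, |t * d2 t| ≤ M2 := by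
    intro t
    by_cases h : |t| ≤ 1
    · rw [abs_mul]
      calc |t| * |d2 t| ≤ 1 * M2 := mul_le_mul h (hM2 t) (abs_nonneg _) one_pos.le
        _ = M2 := one_mul _
    · rw [hd2z t (not_le.mp h)]; simpa using hM2n
  have hsd3 : ∀ t : ℝ, |t ^ 2 * d3 t| ≤ M3 := by
    intro t
    by_cases h : |t| ≤ 1
    · rw [abs_mul, abs_pow]
      calc |t| ^ 2 * |d3 t| ≤ 1 * M3 := by
            apply mul_le_mul _ (hM3 t) (abs_nonneg _) one_pos.le
            calc |t| ^ 2 ≤ 1 ^ 2 := pow_le_pow_left₀ (abs_nonneg t) h 2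
              _ = 1 := one_pow 2
        _ = M3 := one_mul _
    · rw [hd3z t (not_le.mp h)]; simpa using hM3n
  -- Lipschitz estimates
  have hlip : ∀ (f f' : ℝ → ℝ) (L : ℝ), (∀ t, HasDerivAt f (f' t) t) → (∀ t, |f' t| ≤ L) →
      ∀ x z : ℝ, |f x - f z| ≤ L * |x - z| := by
    intro f f' L hder hb x z
    have := convex_univ.norm_image_sub_le_of_norm_deriv_le
      (f := f) (C := L) (fun t _ => (hder t).differentiableAt)
      (fun t _ => by rw [(hder t).deriv]; simpa using hb t) (mem_univ z) (mem_univ x)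
    simpa [Real.norm_eq_abs] using this
  -- χ itself
  have hχlip : ∀ x z : ℝ, |χ x - χ z| ≤ M1 * |x - z| := hlip χ d1 M1 hd hM1
  -- φ₁ t = t * d1 t
  have hφ1der : ∀ t : ℝ, HasDerivAt (fun t : ℝ => t * d1 t) (1 * d1 t + t * d2 t) t :=
    fun t => (hasDerivAt_id t).mul (hd1 t)
  have hφ1lip : ∀ x z : ℝ, |x * d1 x - z * d1 z| ≤ (M1 + M2) * |x - z| := by
    refine hlip _ _ _ hφ1der fun t => ?_
    calc |1 * d1 t + t * d2 t| ≤ |1 * d1 t| + |t * d2 t| := abs_add_le _ _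
      _ ≤ M1 + M2 := by rw [one_mul]; exact add_le_add (hM1 t) (hsd2 t)
  -- φ₂ t = t^2 * d2 t
  have hφ2der : ∀ t : ℝ, HasDerivAt (fun t : ℝ => t ^ 2 * d2 t)
      ((↑2 * t ^ 1) * d2 t + t ^ 2 * d3 t) t := fun t => (hasDerivAt_pow 2 t).mul (hd2 t)
  have hφ2lip : ∀ x z : ℝ, |x ^ 2 * d2 x - z ^ 2 * d2 z| ≤ (2 * M2 + M3) * |x - z| := by
    refine hlip _ _ _ hφ2der fun t => ?_
    calc |(↑2 * t ^ 1) * d2 t + t ^ 2 * d3 t| ≤ |(↑2 * t ^ 1) * d2 t| + |t ^ 2 * d3 t| :=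
          abs_add_le _ _
      _ ≤ 2 * M2 + M3 := by
          refine add_le_add ?_ (hsd3 t)
          have : |(↑2 * t ^ 1) * d2 t| = 2 * |t * d2 t| := by
            rw [pow_one, mul_assoc, abs_mul]; norm_num
          rw [this]; linarith [hsd2 t]
  set L1 := M1 + M2 with hL1
  set L2 := 2 * M2 + M3 with hL2
  refine ⟨2 * M1 + 2 * L1 + 2 * L2 + 1, by positivity, ?_⟩
  intro l hl y y₁
  set C := 2 * M1 + 2 * L1 + 2 * L2 + 1 with hC
  set a := ‖y - y₁‖ with ha
  set b := ‖y‖ + 1 with hb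
  set J := jap y₁ with hJ
  -- jap facts
  have hJ0 : 0 ≤ J := Real.rpow_nonneg (by positivity) _
  have hJsq : J ^ 2 = 1 + ‖y₁‖ ^ 2 := by
    rw [hJ, jap, ← Real.rpow_natCast _ 2, ← Real.rpow_mul (by positivity)]
    norm_num
  have hJ1 : 1 ≤ J := by nlinarith [sq_nonneg (‖y₁‖), sq_nonneg (J - 1)]
  have hJy : ‖y₁‖ ≤ J := by nlinarith [norm_nonneg y₁, sq_nonneg (J - ‖y₁‖)]
  -- |a - b| ≤ 2 J
  have habJ : |a - b| ≤ 2 * J := by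
    have h1 : |‖y - y₁‖ - ‖y‖| ≤ ‖(y - y₁) - y‖ := abs_norm_sub_norm_le _ _
    have h2 : (y - y₁) - y = -y₁ := by abel
    rw [h2, norm_neg] at h1
    have h3 := abs_le.mp h1
    rw [abs_le]
    constructor <;> [skip; skip] <;> · rw [ha, hb]; cases h3; linarith
  have hlab : |l * a - l * b| = l * |a - b| := by
    rw [← mul_sub, abs_mul, abs_of_pos hl]
  constructor
  · -- first bound
    calc |χ (l * a) - χ (l * b)| ≤ M1 * |l * a - l * b| := hχlip _ _
      _ = M1 * (l * |a - b|) := by rw [hlab]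
      _ ≤ M1 * (l * (2 * J)) := by
          refine mul_le_mul_of_nonneg_left ?_ hM1n
          exact mul_le_mul_of_nonneg_left habJ hl.le
      _ = (2 * M1) * (l * J) := by ring
      _ ≤ C * (l * J) := by
          refine mul_le_mul_of_nonneg_right ?_ (mul_nonneg hl.le hJ0)
          rw [hC]; linarith [hM1n, hM2n, hM3n]
      _ = C * l * J := by ring
  have hg : ∀ s : ℝ, HasDerivAt (fun s : ℝ => χ (s * a) - χ (s * b))
      (d1 (s * a) * a - d1 (s * b) * b) s := by
    intro s
    exact ((hd (s * a)).comp s (hasDerivAt_mul_const a)).sub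
      ((hd (s * b)).comp s (hasDerivAt_mul_const b))
  have hgd : deriv (fun s : ℝ => χ (s * a) - χ (s * b)) =
      fun s => d1 (s * a) * a - d1 (s * b) * b := funext fun s => (hg s).deriv
  constructor
  · -- second bound
    rw [hgd]
    have key : l * |d1 (l * a) * a - d1 (l * b) * b| ≤ L1 * (l * |a - b|) := by
      have e : l * (d1 (l * a) * a - d1 (l * b) * b) =
          (l * a) * d1 (l * a) - (l * b) * d1 (l * b) := by ring
      calc l * |d1 (l * a) * a - d1 (l * b) * b|
          = |(l * a) * d1 (l * a) - (l * b) * d1 (l * b)| := by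
            rw [← e, abs_mul, abs_of_pos hl]
        _ ≤ L1 * |l * a - l * b| := hφ1lip _ _
        _ = L1 * (l * |a - b|) := by rw [hlab]
      -- done
    have hL1n : 0 ≤ L1 := by positivity
    have h4 : |d1 (l * a) * a - d1 (l * b) * b| ≤ L1 * |a - b| := by
      have := key
      rw [show L1 * (l * |a - b|) = l * (L1 * |a - b|) by ring] at this
      exact le_of_mul_le_mul_left this hl
    calc |d1 (l * a) * a - d1 (l * b) * b| ≤ L1 * |a - b| := h4
      _ ≤ L1 * (2 * J) := mul_le_mul_of_nonneg_left habJ hL1n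
      _ = (2 * L1) * J := by ring
      _ ≤ C * J := by
          refine mul_le_mul_of_nonneg_right ?_ hJ0
          rw [hC]; linarith [hM1n, hM2n, hM3n]
  · -- third bound
    have hg2 : ∀ s : ℝ, HasDerivAt (fun s : ℝ => d1 (s * a) * a - d1 (s * b) * b)
        (d2 (s * a) * a * a - d2 (s * b) * b * b) s := by
      intro s
      exact (((hd1 (s * a)).comp s (hasDerivAt_mul_const a)).mul_const a).sub
        (((hd1 (s * b)).comp s (hasDerivAt_mul_const b)).mul_const b)
    have hit : iteratedDeriv 2 (fun s : ℝ => χ (s * a) - χ (s * b)) l =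
        d2 (l * a) * a * a - d2 (l * b) * b * b := by
      rw [show (2:ℕ) = 1 + 1 from rfl, iteratedDeriv_succ, iteratedDeriv_one, hgd]
      exact (hg2 l).deriv
    rw [hit]
    have key : l ^ 2 * |d2 (l * a) * a * a - d2 (l * b) * b * b| ≤ L2 * (l * |a - b|) := by
      have e : l ^ 2 * (d2 (l * a) * a * a - d2 (l * b) * b * b) =
          (l * a) ^ 2 * d2 (l * a) - (l * b) ^ 2 * d2 (l * b) := by ring
      calc l ^ 2 * |d2 (l * a) * a * a - d2 (l * b) * b * b|
          = |(l * a) ^ 2 * d2 (l * a) - (l * b) ^ 2 * d2 (l * b)| := by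
            rw [← e, abs_mul, abs_of_pos (by positivity : (0:ℝ) < l ^ 2)]
        _ ≤ L2 * |l * a - l * b| := hφ2lip _ _
        _ = L2 * (l * |a - b|) := by rw [hlab]
    have hL2n : 0 ≤ L2 := by positivity
    have h4 : |d2 (l * a) * a * a - d2 (l * b) * b * b| ≤ L2 * |a - b| * l⁻¹ := by
      rw [show L2 * |a - b| * l⁻¹ = (L2 * (l * |a - b|)) * (l^2)⁻¹ by field_simp]
      rw [show |d2 (l * a) * a * a - d2 (l * b) * b * b| =
        (l^2 * |d2 (l * a) * a * a - d2 (l * b) * b * b|) * (l^2)⁻¹ by field_simp]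
      exact mul_le_mul_of_nonneg_right key (by positivity)
    calc |d2 (l * a) * a * a - d2 (l * b) * b * b| ≤ L2 * |a - b| * l⁻¹ := h4
      _ ≤ L2 * (2 * J) * l⁻¹ := by
          refine mul_le_mul_of_nonneg_right ?_ (by positivity)
          exact mul_le_mul_of_nonneg_left habJ hL2n
      _ = (2 * L2) * (l⁻¹ * J) := by ring
      _ ≤ C * (l⁻¹ * J) := by
          refine mul_le_mul_of_nonneg_right ?_ (mul_nonneg (by positivity) hJ0)
          rw [hC]; linarith [hM1n, hM2n, hM3n]
      _ = C * l⁻¹ * J := by ring
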